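/- Let ρ : S^m → (0,∞) be continuous and let D = {t·x : x ∈ S^m, 0 ≤ t ≤ ρ(x)} be the associated compact star-shaped set, with support function h_D(n) = max_{x ∈ S^m} ρ(x)⟨x,n⟩. Define φ(n) = −ln h_D(n) and ψ(x) = ln ρ(x). Then D is convex (and hence a convex body with the origin in its interior) if and only if φ(n) = min_{x ∈ S^m} (c(n,x) − ψ(x)) for all n ∈ S^m and ψ(x) = min_{n ∈ S^m} (c(n,x) − φ(n)) for all x ∈ S^m. -/

import Mathlib

open MeasureTheory Metric Set Real
open scoped RealInnerProductSpace ENNReal NNReal symmDiff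

noncomputable section

/-- Euclidean space `ℝ^{m+1}`. -/
abbrev Euc (m : ℕ) : Type := EuclideanSpace ℝ (Fin (m + 1))

/-- The unit sphere `S^m ⊂ ℝ^{m+1}`. -/
abbrev Sph (m : ℕ) : Type := Metric.sphere (0 : Euc m) 1

variable {m : ℕ}

/-- The spherical (geodesic) distance `d(n,x) = arccos ⟨n,x⟩`. -/
def sphDist (n x : Sph m) : ℝ := Real.arccos ⟪(n : Euc m), (x : Euc m)⟫

/-- The uniform (rotation invariant) probability measure `σ` on the sphere. -/
def unifSph (m : ℕ) : Measure (Sph m) :=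
  (((volume : Measure (Euc m)).toSphere Set.univ)⁻¹) • (volume : Measure (Euc m)).toSphere

/-- The cost `c(n,x) = -log⟨n,x⟩` if `⟨n,x⟩ > 0`, `+∞` otherwise. -/
def sphCost (n x : Sph m) : ℝ≥0∞ :=
  if 0 < ⟪(n : Euc m), (x : Euc m)⟫ then
    ENNReal.ofReal (-Real.log ⟪(n : Euc m), (x : Euc m)⟫) else ∞

/-- The real-valued cost, meaningful on `{⟨n,x⟩ > 0}`. -/
def sphCostR (n x : Sph m) : ℝ := -Real.log ⟪(n : Euc m), (x : Euc m)⟫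

/-- `F_β = {n : ∃ x ∈ F, ⟨n,x⟩ > cos β}`. -/
def sphExpand (F : Set (Sph m)) (β : ℝ) : Set (Sph m) :=
  {n : Sph m | ∃ x ∈ F, Real.cos β < ⟪(n : Euc m), (x : Euc m)⟫}

/-- Weak Aleksandrov condition with constant `α`. -/
def WeakAleksandrov (lam mu : Measure (Sph m)) (α : ℝ) : Prop :=
  ∀ F : Set (Sph m), IsClosed F →
    (∃ u : Sph m, ∀ x ∈ F, 0 ≤ ⟪(x : Euc m), (u : Euc m)⟫) →
    mu F ≤ lam (sphExpand F (π / 2 - 2 * α))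

/-- The support of a measure on a topological space: points all of whose
neighbourhoods have positive measure. -/
def msupport {X : Type*} [TopologicalSpace X] [MeasurableSpace X] (θ : Measure X) : Set X :=
  {x | ∀ U ∈ nhds x, 0 < θ U}

/-- `supp μ` is not contained in any closed hemisphere. -/
def NotInClosedHemisphere (mu : Measure (Sph m)) : Prop :=
  ¬ ∃ u : Sph m, msupport mu ⊆ {x : Sph m | 0 ≤ ⟪(x : Euc m), (u : Euc m)⟫}

/-- Transport plans: probability measures on `S^m × S^m` with marginals `λ` and `μ`. -/
def IsCoupling (lam mu : Measure (Sph m)) (pl : Measure (Sph m × Sph m)) : Prop :=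
  IsProbabilityMeasure pl ∧ pl.map Prod.fst = lam ∧ pl.map Prod.snd = mu

/-- Total transport cost of a plan. -/
def transportCost (pl : Measure (Sph m × Sph m)) : ℝ≥0∞ :=
  ∫⁻ q, sphCost q.1 q.2 ∂pl

/-- A convex body: compact convex with `0` in the interior. -/
def IsConvexBody (K : Set (Euc m)) : Prop :=
  IsCompact K ∧ Convex ℝ K ∧ 0 ∈ interior K

/-- Radial function `ρ_K(x) = max {t > 0 : t • x ∈ K}`. -/
def radialFn (K : Set (Euc m)) (x : Sph m) : ℝ :=
  sSup {t : ℝ | 0 < t ∧ t • (x : Euc m) ∈ K}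

/-- Support function `h_K(n) = max {⟨y,n⟩ : y ∈ K}`. -/
def suppFn (K : Set (Euc m)) (n : Sph m) : ℝ :=
  sSup ((fun y => ⟪y, (n : Euc m)⟫) '' K)

/-- Gauss image `𝒢_K(ρ⃗_K(ω))`: unit vectors normal to `K` at some point
`ρ_K(x) • x`, `x ∈ ω`. -/
def gaussImage (K : Set (Euc m)) (ω : Set (Sph m)) : Set (Sph m) :=
  {n : Sph m | ∃ x ∈ ω, ∀ y ∈ K, ⟪y - radialFn K x • (x : Euc m), (n : Euc m)⟫ ≤ 0}

/-- `K` solves the Gauss image problem for `(λ, μ)`. -/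
def SolvesGIP (K : Set (Euc m)) (lam mu : Measure (Sph m)) : Prop :=
  ∀ ω : Set (Sph m), MeasurableSet ω → mu ω = lam (gaussImage K ω)

/-- Spherical diameter of a set. -/
def sphDiam (A : Set (Sph m)) : ℝ :=
  sSup {r : ℝ | ∃ x ∈ A, ∃ y ∈ A, r = sphDist x y}

/-- The cost as an extended real number. -/
def cE (n x : Sph m) : EReal := (sphCost n x : EReal)

/-- The `c`-transform `f^c(n) = inf_x (c(n,x) - f(x))`, in extended reals. -/
def ctrans (f : Sph m → EReal) (n : Sph m) : EReal := ⨅ x : Sph m, cE n x - f x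

/-- A Kantorovitch potential: real-valued, Lipschitz, with `φ^{cc} = φ`. -/
def IsKPotential (φ : Sph m → ℝ) : Prop :=
  (∃ L : ℝ≥0, LipschitzWith L φ) ∧
  ∀ n : Sph m, ctrans (ctrans (fun y : Sph m => (φ y : EReal))) n = (φ n : EReal)

/-- The `c`-subdifferential `∂_c φ`. -/
def csubdiff (φ : Sph m → ℝ) : Set (Sph m × Sph m) :=
  {q : Sph m × Sph m |
    (φ q.1 : EReal) + ctrans (fun y : Sph m => (φ y : EReal)) q.2 = cE q.1 q.2}

/-- A `κ`-chain from `x` to `y` inside `A ⊆ S^m` for the spherical distance. -/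
def SphChainIn (A : Set (Sph m)) (κ : ℝ) (x y : Sph m) : Prop :=
  ∃ (p : ℕ) (f : ℕ → Sph m), f 0 = x ∧ f p = y ∧ (∀ i ≤ p, f i ∈ A) ∧
    ∀ i < p, sphDist (f i) (f (i + 1)) < κ

/-- `C` is a `κ`-chain connected component of `A ⊆ S^m`. -/
def IsSphChainComponent (A : Set (Sph m)) (κ : ℝ) (C : Set (Sph m)) : Prop :=
  ∃ x ∈ A, C = {y : Sph m | SphChainIn A κ x y}

/-- A `c`-path in `Γ`: `f 0, …, f k ∈ Γ` with `d((f (i+1)).1, (f i).2) < π/2`. -/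
def IsCPath (Γ : Set (Sph m × Sph m)) (k : ℕ) (f : ℕ → Sph m × Sph m) : Prop :=
  (∀ i ≤ k, f i ∈ Γ) ∧ ∀ i < k, sphDist (f (i + 1)).1 (f i).2 < π / 2

/-- The cost of a `c`-path. -/
def cPathCost (k : ℕ) (f : ℕ → Sph m × Sph m) : ℝ :=
  ∑ i ∈ Finset.range k, (sphCostR (f (i + 1)).1 (f i).2 - sphCostR (f i).1 (f i).2)

/-- `c`-cyclically monotone subsets of `S^m × S^m`. -/
def CCyclMonotone (Γ : Set (Sph m × Sph m)) : Prop :=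
  ∀ (k : ℕ) (f : ℕ → Sph m × Sph m), (∀ i < k, f i ∈ Γ) → f k = f 0 →
    ∑ i ∈ Finset.range k, sphCost (f i).1 (f i).2 ≤
      ∑ i ∈ Finset.range k, sphCost (f (i + 1)).1 (f i).2

end

/-!
Write `S(n) = max_x ρ(x)⟨x,n⟩`. Both `c`-transform identities compare `ρ(x)⟨x,n⟩` with `S(n)`:
`φ(n) + ψ(x) ≤ c(n,x)` is exactly `ρ(x)⟨x,n⟩ ≤ S(n)`, so the first identity holds for every
star body, and the second says that every radial point `ρ(x)x` of `D` lies on a supporting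
hyperplane `{⟨·,n⟩ = S(n)}`. For convex `D` such a hyperplane comes from Hahn–Banach; conversely,
it makes `D` the intersection of the half-spaces `{⟨·,n⟩ ≤ S(n)}`.
-/

open Filter Topology

theorem Convex.exists_inner_le_of_notMem_interior {E : Type*} [NormedAddCommGroup E]
    [InnerProductSpace ℝ E] [CompleteSpace E] {C : Set E} {p : E} (hC : Convex ℝ C)
    (hint : (interior C).Nonempty) (hp : p ∉ interior C) :
    ∃ v : E, v ≠ 0 ∧ ∀ y ∈ C, ⟪y, v⟫ ≤ ⟪p, v⟫ := by
  obtain ⟨f, hf⟩ := geometric_hahn_banach_open_point hC.interior isOpen_interior hp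
  obtain ⟨a, ha⟩ := hint
  have hinner (y : E) : ⟪y, (InnerProductSpace.toDual ℝ E).symm f⟫ = f y := by
    rw [real_inner_comm, InnerProductSpace.toDual_symm_apply]
  refine ⟨(InnerProductSpace.toDual ℝ E).symm f, fun hv => ?_, fun y hy => ?_⟩
  · simpa [← hinner, hv] using hf a ha
  · have hy' : y ∈ closure (interior C) := by
      rw [hC.closure_interior_eq_closure_of_nonempty_interior ⟨a, ha⟩]
      exact subset_closure hy
    rw [hinner, hinner]
    exact (isClosed_le f.continuous continuous_const).closure_subset_iff.2
      (fun b hb => (hf b hb).le) hy'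

noncomputable section

variable {m : ℕ}

instance : Nonempty (Sph m) :=
  ((NormedSpace.sphere_nonempty (x := (0 : Euc m))).mpr zero_le_one).to_subtype

lemma norm_sph (x : Sph m) : ‖(x : Euc m)‖ = 1 := by
  simp

lemma inner_sph_self (x : Sph m) : ⟪(x : Euc m), x⟫ = 1 := by
  rw [real_inner_self_eq_norm_sq, norm_sph, one_pow]

lemma inner_sph_le_one (n x : Sph m) : ⟪(n : Euc m), x⟫ ≤ 1 := by
  simpa only [norm_sph, mul_one] using real_inner_le_norm (n : Euc m) x

lemma exists_eq_norm_smul_sph (y : Euc m) : ∃ u : Sph m, y = ‖y‖ • (u : Euc m) := by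
  rcases eq_or_ne y 0 with rfl | hy
  · exact ⟨Classical.arbitrary _, by simp⟩
  · refine ⟨⟨‖y‖⁻¹ • y, by simp [norm_smul, hy]⟩, ?_⟩
    simp [smul_smul, hy]

lemma exp_neg_log_add_log {r s : ℝ} (hr : 0 < r) (hs : 0 < s) :
    exp (-log s + log r) = r / s := by
  rw [exp_add, exp_neg, exp_log hs, exp_log hr, inv_mul_eq_div]

lemma exp_mul_eq_exp_add_log (a : ℝ) {p : ℝ} (hp : 0 < p) : exp a * p = exp (a + log p) := by
  rw [exp_add, exp_log hp]

lemma cE_of_pos {n x : Sph m} (h : 0 < ⟪(n : Euc m), x⟫) :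
    cE n x = ((-log ⟪(n : Euc m), x⟫ : ℝ) : EReal) := by
  have : log ⟪(n : Euc m), x⟫ ≤ 0 := log_nonpos h.le (inner_sph_le_one n x)
  rw [cE, sphCost, if_pos h, EReal.coe_ennreal_ofReal, max_eq_left (by linarith)]

lemma cE_of_nonpos {n x : Sph m} (h : ⟪(n : Euc m), x⟫ ≤ 0) : cE n x = ⊤ := by
  rw [cE, sphCost, if_neg h.not_gt]
  rfl

-- Multiplying by `⟨n,x⟩` instead of dividing keeps this right where `c(n,x) = +∞`.
lemma coe_le_cE_sub_iff (n x : Sph m) (a b : ℝ) :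
    (a : EReal) ≤ cE n x - b ↔ exp (a + b) * ⟪(n : Euc m), x⟫ ≤ 1 := by
  rcases lt_or_ge 0 ⟪(n : Euc m), x⟫ with h | h
  · rw [cE_of_pos h, ← EReal.coe_sub, EReal.coe_le_coe_iff, exp_mul_eq_exp_add_log _ h,
      exp_le_one_iff]
    constructor <;> intro <;> linarith
  · rw [cE_of_nonpos h, EReal.top_sub_coe]
    exact iff_of_true le_top (by nlinarith [exp_pos (a + b)])

lemma cE_sub_le_coe_iff (n x : Sph m) (a b : ℝ) :
    cE n x - b ≤ a ↔ 1 ≤ exp (a + b) * ⟪(n : Euc m), x⟫ := by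
  rcases lt_or_ge 0 ⟪(n : Euc m), x⟫ with h | h
  · rw [cE_of_pos h, ← EReal.coe_sub, EReal.coe_le_coe_iff, exp_mul_eq_exp_add_log _ h,
      one_le_exp_iff]
    constructor <;> intro <;> linarith
  · rw [cE_of_nonpos h, EReal.top_sub_coe]
    exact iff_of_false (by simp) (by nlinarith [exp_pos (a + b)])

lemma cE_sub_lt_coe_iff (n x : Sph m) (a b : ℝ) :
    cE n x - b < a ↔ 1 < exp (a + b) * ⟪(n : Euc m), x⟫ := by
  rw [← not_le, coe_le_cE_sub_iff, not_le]

def starBody (ρ : Sph m → ℝ) : Set (Euc m) :=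
  {y | ∃ (x : Sph m) (t : ℝ), 0 ≤ t ∧ t ≤ ρ x ∧ y = t • (x : Euc m)}

def starSupport (ρ : Sph m → ℝ) (n : Sph m) : ℝ :=
  ⨆ x : Sph m, ρ x * ⟪(x : Euc m), n⟫

section StarBody

variable {ρ : Sph m → ℝ}

lemma smul_mem_starBody {x : Sph m} {t : ℝ} (ht₀ : 0 ≤ t) (ht : t ≤ ρ x) :
    t • (x : Euc m) ∈ starBody ρ :=
  ⟨x, t, ht₀, ht, rfl⟩

lemma le_of_smul_mem_starBody {x : Sph m} {t : ℝ} (ht : 0 < t)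
    (hx : t • (x : Euc m) ∈ starBody ρ) : t ≤ ρ x := by
  obtain ⟨x', s, hs₀, hs, he⟩ := hx
  have hts : t = s := by
    simpa [norm_smul, abs_of_pos ht, abs_of_nonneg hs₀] using congrArg norm he
  subst hts
  obtain rfl : x = x' := Subtype.ext (smul_right_injective (Euc m) ht.ne' he)
  exact hs

variable (hρc : Continuous ρ) (hρpos : ∀ x, 0 < ρ x)
include hρc

lemma le_starSupport (n x : Sph m) : ρ x * ⟪(x : Euc m), n⟫ ≤ starSupport ρ n :=
  le_ciSup (isCompact_range (hρc.mul (continuous_subtype_val.inner continuous_const))).bddAbove x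

lemma exists_starSupport_eq (n : Sph m) :
    ∃ x : Sph m, starSupport ρ n = ρ x * ⟪(x : Euc m), n⟫ := by
  obtain ⟨x, -, hx⟩ := isCompact_univ.exists_isMaxOn univ_nonempty
    (hρc.mul (continuous_subtype_val.inner continuous_const)).continuousOn
  exact ⟨x, le_antisymm (ciSup_le fun y => hx (mem_univ y)) (le_starSupport hρc n x)⟩

include hρpos

lemma starSupport_pos (n : Sph m) : 0 < starSupport ρ n := by
  have h := le_starSupport hρc n n
  rw [inner_sph_self, mul_one] at h
  exact (hρpos n).trans_le h

lemma inner_le_starSupport {y : Euc m} (hy : y ∈ starBody ρ) (n : Sph m) :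
    ⟪y, n⟫ ≤ starSupport ρ n := by
  obtain ⟨x, t, ht₀, ht, rfl⟩ := hy
  have hS := le_starSupport hρc n x
  have hpos := starSupport_pos hρc hρpos n
  rw [real_inner_smul_left]
  rcases le_total 0 ⟪(x : Euc m), n⟫ with h | h <;> nlinarith

lemma zero_mem_interior_starBody : (0 : Euc m) ∈ interior (starBody ρ) := by
  obtain ⟨xm, -, hxm⟩ := isCompact_univ.exists_isMinOn univ_nonempty hρc.continuousOn
  refine mem_interior_iff_mem_nhds.2 (mem_of_superset (ball_mem_nhds 0 (hρpos xm)) ?_)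
  intro y hy
  obtain ⟨u, hu⟩ := exists_eq_norm_smul_sph y
  rw [hu]
  exact smul_mem_starBody (norm_nonneg y) ((mem_ball_zero_iff.1 hy).le.trans (hxm (mem_univ u)))

omit hρc in
lemma smul_notMem_interior_starBody (x : Sph m) : ρ x • (x : Euc m) ∉ interior (starBody ρ) := by
  intro hx
  have hnhds : ∀ᶠ t in 𝓝[>] ρ x, t • (x : Euc m) ∈ starBody ρ :=
    nhdsWithin_le_nhds ((continuous_id.smul continuous_const :
      Continuous fun t : ℝ => t • (x : Euc m)).continuousAt.preimage_mem_nhds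
        (mem_interior_iff_mem_nhds.1 hx))
  obtain ⟨t, ht, hgt⟩ := (hnhds.and self_mem_nhdsWithin).exists
  exact (not_le.2 hgt) (le_of_smul_mem_starBody ((hρpos x).trans hgt) ht)

lemma exists_starSupport_eq_of_convex (hconv : Convex ℝ (starBody ρ)) (x : Sph m) :
    ∃ n : Sph m, starSupport ρ n = ρ x * ⟪(x : Euc m), n⟫ := by
  obtain ⟨v, hv₀, hv⟩ := hconv.exists_inner_le_of_notMem_interior
    ⟨0, zero_mem_interior_starBody hρc hρpos⟩ (smul_notMem_interior_starBody hρpos x)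
  obtain ⟨n, hn⟩ := exists_eq_norm_smul_sph v
  refine ⟨n, le_antisymm (ciSup_le fun y => ?_) (le_starSupport hρc n x)⟩
  have hy := hv _ (smul_mem_starBody (hρpos y).le le_rfl)
  rw [hn, real_inner_smul_right, real_inner_smul_right, real_inner_smul_left,
    real_inner_smul_left] at hy
  exact le_of_mul_le_mul_left hy (norm_pos_iff.2 hv₀)

lemma convex_starBody_of_forall_lt
    (h : ∀ (x : Sph m) (t : ℝ), ρ x < t → ∃ n : Sph m, starSupport ρ n < t * ⟪(x : Euc m), n⟫) :
    Convex ℝ (starBody ρ) := by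
  have hK : starBody ρ = ⋂ n : Sph m, {y | ⟪y, (n : Euc m)⟫ ≤ starSupport ρ n} := by
    refine Subset.antisymm (fun y hy => mem_iInter.2 (inner_le_starSupport hρc hρpos hy)) ?_
    intro y hy
    obtain ⟨u, hu⟩ := exists_eq_norm_smul_sph y
    refine ⟨u, ‖y‖, norm_nonneg y, not_lt.1 fun hlt => ?_, hu⟩
    obtain ⟨n, hn⟩ := h u ‖y‖ hlt
    have hyn : ⟪y, (n : Euc m)⟫ ≤ starSupport ρ n := mem_iInter.1 hy n
    rw [hu, real_inner_smul_left] at hyn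
    linarith
  rw [hK]
  exact convex_iInter fun n => convex_halfSpace_le
    ⟨fun y z => inner_add_left y z _, fun c y => real_inner_smul_left y _ c⟩ _

lemma one_le_exp_mul_inner_of_starSupport_eq {n x : Sph m}
    (h : starSupport ρ n = ρ x * ⟪(x : Euc m), n⟫) :
    1 ≤ exp (-log (starSupport ρ n) + log (ρ x)) * ⟪(n : Euc m), x⟫ := by
  rw [exp_neg_log_add_log (hρpos x) (starSupport_pos hρc hρpos n), div_mul_eq_mul_div,
    one_le_div (starSupport_pos hρc hρpos n), real_inner_comm, h]

lemma neg_log_starSupport_le_cE_sub (n x : Sph m) :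
    ((-log (starSupport ρ n) : ℝ) : EReal) ≤ cE n x - ((log (ρ x) : ℝ) : EReal) := by
  rw [coe_le_cE_sub_iff, exp_neg_log_add_log (hρpos x) (starSupport_pos hρc hρpos n),
    div_mul_eq_mul_div, div_le_one (starSupport_pos hρc hρpos n), real_inner_comm]
  exact le_starSupport hρc n x

lemma neg_log_starSupport_eq_iInf (n : Sph m) :
    ((-log (starSupport ρ n) : ℝ) : EReal) =
      ⨅ x : Sph m, cE n x - ((log (ρ x) : ℝ) : EReal) := by
  obtain ⟨x, hx⟩ := exists_starSupport_eq hρc n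
  refine le_antisymm (le_iInf (neg_log_starSupport_le_cE_sub hρc hρpos n)) (iInf_le_of_le x ?_)
  rw [cE_sub_le_coe_iff]
  exact one_le_exp_mul_inner_of_starSupport_eq hρc hρpos hx

lemma log_eq_iInf_of_starSupport_eq {n x : Sph m}
    (h : starSupport ρ n = ρ x * ⟪(x : Euc m), n⟫) :
    ((log (ρ x) : ℝ) : EReal) =
      ⨅ n : Sph m, cE n x - ((-log (starSupport ρ n) : ℝ) : EReal) := by
  refine le_antisymm (le_iInf fun n => ?_) (iInf_le_of_le n ?_)
  · rw [coe_le_cE_sub_iff, add_comm, ← coe_le_cE_sub_iff]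
    exact neg_log_starSupport_le_cE_sub hρc hρpos n x
  · rw [cE_sub_le_coe_iff, add_comm]
    exact one_le_exp_mul_inner_of_starSupport_eq hρc hρpos h

lemma exists_starSupport_lt_of_log_eq_iInf {x : Sph m} {t : ℝ}
    (h : ((log (ρ x) : ℝ) : EReal) =
      ⨅ n : Sph m, cE n x - ((-log (starSupport ρ n) : ℝ) : EReal))
    (ht : ρ x < t) :
    ∃ n : Sph m, starSupport ρ n < t * ⟪(x : Euc m), n⟫ := by
  have hlt : ((log (ρ x) : ℝ) : EReal) < ((log t : ℝ) : EReal) :=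
    EReal.coe_lt_coe_iff.2 (log_lt_log (hρpos x) ht)
  rw [h, iInf_lt_iff] at hlt
  obtain ⟨n, hn⟩ := hlt
  have hS := starSupport_pos hρc hρpos n
  rw [cE_sub_lt_coe_iff, add_comm, exp_neg_log_add_log ((hρpos x).trans ht) hS,
    div_mul_eq_mul_div, one_lt_div hS, real_inner_comm] at hn
  exact ⟨n, hn⟩

end StarBody

end

/-- Oliker's change of functions: a star-shaped set `D` is
convex iff `φ = −ln h_D` and `ψ = ln ρ_D` are `c`-conjugate of each other. -/
theorem stmt_15 (m : ℕ) (ρ : Sph m → ℝ) (hρc : Continuous ρ) (hρpos : ∀ x, 0 < ρ x)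
    (D : Set (Euc m))
    (hD : D = {y : Euc m | ∃ (x : Sph m) (t : ℝ), 0 ≤ t ∧ t ≤ ρ x ∧ y = t • (x : Euc m)})
    (h : Sph m → ℝ)
    (hh : ∀ n : Sph m, h n = ⨆ x : Sph m, ρ x * ⟪(x : Euc m), (n : Euc m)⟫)
    (φ ψ : Sph m → ℝ)
    (hφ : ∀ n, φ n = -Real.log (h n)) (hψ : ∀ x, ψ x = Real.log (ρ x)) :
    Convex ℝ D ↔
      ((∀ n : Sph m, (φ n : EReal) = ⨅ x : Sph m, cE n x - (ψ x : EReal)) ∧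
       (∀ x : Sph m, (ψ x : EReal) = ⨅ n : Sph m, cE n x - (φ n : EReal))) := by
  obtain rfl : h = starSupport ρ := funext hh
  obtain rfl : D = starBody ρ := hD
  simp only [hφ, hψ]
  refine ⟨fun hconv => ⟨neg_log_starSupport_eq_iInf hρc hρpos, fun x => ?_⟩, fun ⟨_, hψeq⟩ => ?_⟩
  · obtain ⟨n, hn⟩ := exists_starSupport_eq_of_convex hρc hρpos hconv x
    exact log_eq_iInf_of_starSupport_eq hρc hρpos hn
  · exact convex_starBody_of_forall_lt hρc hρpos fun x t ht =>
      exists_starSupport_lt_of_log_eq_iInf hρc hρpos (hψeq x) ht
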